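/- If h : ℝ → ℝ is monotone nondecreasing and applied elementwise, and l ≤ z ≤ u coordinatewise, then h(W((u+l)/2) + b − |W|((u−l)/2)) ≤ h(W z + b) ≤ h(W((u+l)/2) + b + |W|((u−l)/2)) coordinatewise. -/

import Mathlib

open Matrix Finset

/-- The ℓ_p norm on ℝ^ι for a real exponent p. -/
noncomputable def lpNorm {ι : Type*} [Fintype ι] (p : ℝ) (x : ι → ℝ) : ℝ :=
  (∑ i, |x i| ^ p) ^ (1 / p)

/-! Each coordinate of `z` deviates from the box midpoint `(u + l) / 2` by at most the radius
`(u - l) / 2`, so by the triangle inequality a row `w` moves `w ⬝ᵥ z` away from `w ⬝ᵥ midpoint`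
by at most `|w| ⬝ᵥ radius`; a monotone `h` preserves the resulting two-sided bound. -/

theorem abs_sub_midpoint_le_half_sub {l u z : ℝ} (hl : l ≤ z) (hu : z ≤ u) :
    |z - (u + l) / 2| ≤ (u - l) / 2 :=
  abs_le.2 ⟨by linarith, by linarith⟩

theorem abs_dotProduct_sub_midpoint_le {ι : Type*} [Fintype ι] (w l u z : ι → ℝ)
    (hz : ∀ j, l j ≤ z j ∧ z j ≤ u j) :
    |w ⬝ᵥ z - w ⬝ᵥ (fun j => (u j + l j) / 2)|
      ≤ (fun j => |w j|) ⬝ᵥ (fun j => (u j - l j) / 2) := by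
  rw [← dotProduct_sub]
  calc |∑ j, w j * (z j - (u j + l j) / 2)|
      ≤ ∑ j, |w j * (z j - (u j + l j) / 2)| := abs_sum_le_sum_abs _ _
    _ ≤ ∑ j, |w j| * ((u j - l j) / 2) := sum_le_sum fun j _ => by
        rw [abs_mul]
        exact mul_le_mul_of_nonneg_left
          (abs_sub_midpoint_le_half_sub (hz j).1 (hz j).2) (abs_nonneg _)

theorem abs_mulVec_sub_midpoint_le {ι κ : Type*} [Fintype κ] (W : Matrix ι κ ℝ)
    (l u z : κ → ℝ) (hz : ∀ j, l j ≤ z j ∧ z j ≤ u j) (i : ι) :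
    |(W *ᵥ z) i - (W *ᵥ fun j => (u j + l j) / 2) i|
      ≤ (W.map (fun x => |x|) *ᵥ fun j => (u j - l j) / 2) i :=
  abs_dotProduct_sub_midpoint_le (W i) l u z hz

theorem affine_activation_box_bound_general {m n : ℕ}
    (W : Matrix (Fin m) (Fin n) ℝ) (b : Fin m → ℝ) (l u z : Fin n → ℝ)
    (h : ℝ → ℝ) (hmono : Monotone h)
    (hz : ∀ j, l j ≤ z j ∧ z j ≤ u j) :
    ∀ i : Fin m,
      h ((W.mulVec (fun j => (u j + l j) / 2) + b) i
          - (W.map (fun x => |x|)).mulVec (fun j => (u j - l j) / 2) i)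
        ≤ h ((W.mulVec z + b) i) ∧
      h ((W.mulVec z + b) i)
        ≤ h ((W.mulVec (fun j => (u j + l j) / 2) + b) i
          + (W.map (fun x => |x|)).mulVec (fun j => (u j - l j) / 2) i) := by
  intro i
  obtain ⟨hlower, hupper⟩ := abs_le.1 (abs_mulVec_sub_midpoint_le W l u z hz i)
  simp only [Pi.add_apply]
  exact ⟨hmono (by linarith), hmono (by linarith)⟩

/-- midpoint–radius bound composed with a monotone elementwise activation. -/
theorem affine_activation_box_bound {m n : ℕ}
    (W : Matrix (Fin m) (Fin n) ℝ) (b : Fin m → ℝ) (l u z : Fin n → ℝ)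
    (h : ℝ → ℝ) (hmono : Monotone h)
    (hlu : ∀ j, l j ≤ u j) (hz : ∀ j, l j ≤ z j ∧ z j ≤ u j) :
    ∀ i : Fin m,
      h ((W.mulVec (fun j => (u j + l j) / 2) + b) i
          - (W.map (fun x => |x|)).mulVec (fun j => (u j - l j) / 2) i)
        ≤ h ((W.mulVec z + b) i) ∧
      h ((W.mulVec z + b) i)
        ≤ h ((W.mulVec (fun j => (u j + l j) / 2) + b) i
          + (W.map (fun x => |x|)).mulVec (fun j => (u j - l j) / 2) i) :=
  affine_activation_box_bound_general W b l u z h hmono hz
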